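/- arXiv:math-ph/0003016 — 4 statements merged into one kernel-verified Lean document; each statement's English description precedes it below -/
import Mathlib

section
/- Let T_1,…,T_N be constant (parameter-independent) 2×2 complex matrices, and let G_1,…,G_N : U → GL_2(ℂ) be holomorphic maps such that, with A_i := G_i T_i G_i⁻¹, the equations ∂G_j/∂λ_i = A_i G_j/(λ_i − λ_j) for i ≠ j and ∂G_j/∂λ_j = −Σ_{i≠j} A_i G_j/(λ_i − λ_j) hold on U. Then the matrices A_j = G_j T_j G_j⁻¹ satisfy the Schlesinger system on U. -/
open Matrix

attribute [local instance] Matrix.normedAddCommGroup Matrix.normedSpace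

/-- The (2×2) Schlesinger system at a point `x = (λ_1,…,λ_N)`:
`∂A_j/∂λ_i = [A_j, A_i]/(λ_j − λ_i)` for `i ≠ j` and
`∂A_j/∂λ_j = −Σ_{i≠j} [A_j, A_i]/(λ_j − λ_i)`. -/
def IsSchlesingerAt {N : ℕ} (A : Fin N → (Fin N → ℂ) → Matrix (Fin 2) (Fin 2) ℂ)
    (x : Fin N → ℂ) : Prop :=
  (∀ i j : Fin N, i ≠ j →
      fderiv ℂ (A j) x (Pi.single i 1) =
        (x j - x i)⁻¹ • (A j x * A i x - A i x * A j x)) ∧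
  ∀ j : Fin N,
    fderiv ℂ (A j) x (Pi.single j 1) =
      -∑ i ∈ Finset.univ.filter (· ≠ j),
        (x j - x i)⁻¹ • (A j x * A i x - A i x * A j x)

/-! For constant `T`, the product rule and `d(G⁻¹) = -G⁻¹ (dG) G⁻¹` give
`d(G T G⁻¹) = [dG G⁻¹, G T G⁻¹]`. The hypotheses say exactly that `∂_i G_j G_j⁻¹` equals
`A_i/(λ_i − λ_j)` for `i ≠ j` and `−Σ_{i≠j} A_i/(λ_i − λ_j)` for `i = j`, so substituting them
into this commutator gives the Schlesinger system. -/

namespace Matrix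

variable {𝕜 : Type*} [NontriviallyNormedField 𝕜]
  {E : Type*} [NormedAddCommGroup E] [NormedSpace 𝕜 E] {x : E}

theorem differentiableAt_iff_entry {m n : Type*} [Fintype n] {A : E → Matrix m n 𝕜} :
    DifferentiableAt 𝕜 A x ↔ ∀ i j, DifferentiableAt 𝕜 (fun y => A y i j) x :=
  ⟨fun h i j => differentiableAt_pi.1 (differentiableAt_pi.1 h i) j,
    fun h => differentiableAt_pi.2 fun i => differentiableAt_pi.2 (h i)⟩

section Mul

variable [CompleteSpace 𝕜] {l m n : Type*} [Fintype l] [Fintype m] [Fintype n]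

noncomputable def mulCLM : Matrix l m 𝕜 →L[𝕜] Matrix m n 𝕜 →L[𝕜] Matrix l n 𝕜 :=
  LinearMap.toContinuousLinearMap
    (LinearMap.toContinuousLinearMap.toLinearMap ∘ₗ mulLinearMap 𝕜)

variable {A : E → Matrix l m 𝕜} {B : E → Matrix m n 𝕜}

theorem _root_.DifferentiableAt.matrix_mul (hA : DifferentiableAt 𝕜 A x)
    (hB : DifferentiableAt 𝕜 B x) : DifferentiableAt 𝕜 (fun y => A y * B y) x :=
  (mulCLM.hasFDerivAt_of_bilinear hA.hasFDerivAt hB.hasFDerivAt).differentiableAt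

theorem fderiv_matrix_mul_apply (hA : DifferentiableAt 𝕜 A x) (hB : DifferentiableAt 𝕜 B x)
    (v : E) :
    fderiv 𝕜 (fun y => A y * B y) x v = A x * fderiv 𝕜 B x v + fderiv 𝕜 A x v * B x :=
  congrArg (· v) (mulCLM.fderiv_of_bilinear hA hB)

end Mul

section Square

variable {n : Type*} [Fintype n] [DecidableEq n] {A : E → Matrix n n 𝕜}

theorem _root_.DifferentiableAt.matrix_det (hA : DifferentiableAt 𝕜 A x) :
    DifferentiableAt 𝕜 (fun y => (A y).det) x := by
  have hentry := differentiableAt_iff_entry.1 hA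
  simp_rw [det_apply]
  fun_prop

theorem _root_.DifferentiableAt.matrix_adjugate (hA : DifferentiableAt 𝕜 A x) :
    DifferentiableAt 𝕜 (fun y => (A y).adjugate) x := by
  have hentry := differentiableAt_iff_entry.1 hA
  refine differentiableAt_iff_entry.2 fun i j => ?_
  simp_rw [adjugate_apply]
  refine DifferentiableAt.matrix_det (differentiableAt_iff_entry.2 fun k c => ?_)
  simp only [updateRow_apply]
  split_ifs
  exacts [differentiableAt_const _, hentry k c]

theorem _root_.DifferentiableAt.matrix_inv (hA : DifferentiableAt 𝕜 A x)
    (hdet : IsUnit (A x).det) : DifferentiableAt 𝕜 (fun y => (A y)⁻¹) x := by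
  simp_rw [inv_def]
  exact (hA.matrix_det.inverse hdet).smul hA.matrix_adjugate

variable [CompleteSpace 𝕜]

theorem fderiv_matrix_inv_apply (hA : DifferentiableAt 𝕜 A x) (hdet : IsUnit (A x).det) (v : E) :
    fderiv 𝕜 (fun y => (A y)⁻¹) x v = -((A x)⁻¹ * fderiv 𝕜 A x v * (A x)⁻¹) := by
  have hconst : (fun y => A y * (A y)⁻¹) =ᶠ[nhds x] fun _ => 1 :=
    (hA.matrix_det.continuousAt.eventually_ne hdet.ne_zero).mono fun y hy =>
      mul_nonsing_inv _ hy.isUnit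
  have hzero : A x * fderiv 𝕜 (fun y => (A y)⁻¹) x v + fderiv 𝕜 A x v * (A x)⁻¹ = 0 := by
    rw [← fderiv_matrix_mul_apply hA (hA.matrix_inv hdet), hconst.fderiv_eq, fderiv_fun_const]
    rfl
  calc fderiv 𝕜 (fun y => (A y)⁻¹) x v
      = (A x)⁻¹ * (A x * fderiv 𝕜 (fun y => (A y)⁻¹) x v) :=
        (nonsing_inv_mul_cancel_left _ _ hdet).symm
    _ = -((A x)⁻¹ * fderiv 𝕜 A x v * (A x)⁻¹) := by
        rw [eq_neg_of_add_eq_zero_left hzero, Matrix.mul_neg, Matrix.mul_assoc]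

theorem fderiv_matrix_conj_apply (hA : DifferentiableAt 𝕜 A x) (hdet : IsUnit (A x).det)
    (T : Matrix n n 𝕜) (v : E) :
    fderiv 𝕜 (fun y => A y * T * (A y)⁻¹) x v =
      fderiv 𝕜 A x v * (A x)⁻¹ * (A x * T * (A x)⁻¹) -
        A x * T * (A x)⁻¹ * (fderiv 𝕜 A x v * (A x)⁻¹) := by
  rw [fderiv_matrix_mul_apply (hA.matrix_mul (differentiableAt_const T)) (hA.matrix_inv hdet),
    fderiv_matrix_inv_apply hA hdet, fderiv_matrix_mul_apply hA (differentiableAt_const T),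
    fderiv_const_apply]
  simp only [Matrix.mul_assoc, nonsing_inv_mul_cancel_left _ _ hdet, _root_.zero_apply,
    Matrix.mul_zero, zero_add, Matrix.mul_neg]
  abel

theorem fderiv_matrix_conj_apply_of_fderiv_eq_mul (hA : DifferentiableAt 𝕜 A x)
    (hdet : IsUnit (A x).det) (T : Matrix n n 𝕜) {v : E} {M : Matrix n n 𝕜}
    (hv : fderiv 𝕜 A x v = M * A x) :
    fderiv 𝕜 (fun y => A y * T * (A y)⁻¹) x v =
      M * (A x * T * (A x)⁻¹) - A x * T * (A x)⁻¹ * M := by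
  rw [fderiv_matrix_conj_apply hA hdet, hv, mul_nonsing_inv_cancel_right _ _ hdet]

end Square

end Matrix

theorem inv_sub_smul_commutator {𝕜 R : Type*} [Field 𝕜] [Ring R] [Algebra 𝕜 R] (a b : 𝕜)
    (X Y : R) : (a - b)⁻¹ • X * Y - Y * ((a - b)⁻¹ • X) = (b - a)⁻¹ • (Y * X - X * Y) := by
  rw [smul_mul_assoc, mul_smul_comm, ← smul_sub, ← neg_sub b a, inv_neg, neg_smul, ← smul_neg,
    neg_sub]

theorem schlesinger_of_G_equations_general (N : ℕ)
    (U : Set (Fin N → ℂ)) (hU : IsOpen U)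
    (T : Fin N → Matrix (Fin 2) (Fin 2) ℂ)
    (G : Fin N → (Fin N → ℂ) → Matrix (Fin 2) (Fin 2) ℂ)
    (hG : ∀ j, DifferentiableOn ℂ (G j) U)
    (hGinv : ∀ j, ∀ x ∈ U, IsUnit (G j x).det)
    (hGeq : ∀ x ∈ U, ∀ i j : Fin N, i ≠ j →
        fderiv ℂ (G j) x (Pi.single i 1) =
          (x i - x j)⁻¹ • (G i x * T i * (G i x)⁻¹ * G j x))
    (hGeqDiag : ∀ x ∈ U, ∀ j : Fin N,
        fderiv ℂ (G j) x (Pi.single j 1) =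
          -∑ i ∈ Finset.univ.filter (· ≠ j),
            (x i - x j)⁻¹ • (G i x * T i * (G i x)⁻¹ * G j x)) :
    ∀ x ∈ U, IsSchlesingerAt (fun j y => G j y * T j * (G j y)⁻¹) x := by
  intro x hx
  have hdiff j : DifferentiableAt ℂ (G j) x := (hG j).differentiableAt (hU.mem_nhds hx)
  refine ⟨fun i j hij => ?_, fun j => ?_⟩
  · rw [fderiv_matrix_conj_apply_of_fderiv_eq_mul (hdiff j) (hGinv j x hx) (T j)
      ((hGeq x hx i j hij).trans (smul_mul_assoc _ _ _).symm), inv_sub_smul_commutator]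
  · have hv : fderiv ℂ (G j) x (Pi.single j 1) =
        (-∑ i ∈ Finset.univ.filter (· ≠ j), (x i - x j)⁻¹ • (G i x * T i * (G i x)⁻¹)) *
          G j x := by
      simp only [hGeqDiag x hx j, Matrix.neg_mul, Finset.sum_mul, smul_mul_assoc]
    rw [fderiv_matrix_conj_apply_of_fderiv_eq_mul (hdiff j) (hGinv j x hx) (T j) hv,
      Matrix.neg_mul, Matrix.mul_neg, neg_sub_neg, ← neg_sub, Finset.sum_mul, Finset.mul_sum,
      ← Finset.sum_sub_distrib]
    simp only [inv_sub_smul_commutator]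

/-- If constant matrices `T_j` and holomorphic invertible matrices `G_j` satisfy
`∂G_j/∂λ_i = A_i G_j/(λ_i − λ_j)` (`i ≠ j`) and `∂G_j/∂λ_j = −Σ_{i≠j} A_i G_j/(λ_i − λ_j)`,
where `A_i := G_i T_i G_i⁻¹`, then the `A_j = G_j T_j G_j⁻¹` satisfy the Schlesinger system. -/
theorem schlesinger_of_G_equations (N : ℕ) (hN : 2 ≤ N)
    (U : Set (Fin N → ℂ)) (hU : IsOpen U)
    (hdist : ∀ x ∈ U, ∀ i j : Fin N, i ≠ j → x i ≠ x j)
    (T : Fin N → Matrix (Fin 2) (Fin 2) ℂ)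
    (G : Fin N → (Fin N → ℂ) → Matrix (Fin 2) (Fin 2) ℂ)
    (hG : ∀ j, DifferentiableOn ℂ (G j) U)
    (hGinv : ∀ j, ∀ x ∈ U, IsUnit (G j x).det)
    (hGeq : ∀ x ∈ U, ∀ i j : Fin N, i ≠ j →
        fderiv ℂ (G j) x (Pi.single i 1) =
          (x i - x j)⁻¹ • (G i x * T i * (G i x)⁻¹ * G j x))
    (hGeqDiag : ∀ x ∈ U, ∀ j : Fin N,
        fderiv ℂ (G j) x (Pi.single j 1) =
          -∑ i ∈ Finset.univ.filter (· ≠ j),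
            (x i - x j)⁻¹ • (G i x * T i * (G i x)⁻¹ * G j x)) :
    ∀ x ∈ U, IsSchlesingerAt (fun j y => G j y * T j * (G j y)⁻¹) x :=
  schlesinger_of_G_equations_general N U hU T G hG hGinv hGeq hGeqDiag
end

section
/- If A_1,…,A_N : U → M_2(ℂ) satisfy the Schlesinger system, then the Hamiltonians H_i := (1/2) Σ_{j≠i} tr(A_i A_j)/(λ_j − λ_i) satisfy ∂H_i/∂λ_j = ∂H_j/∂λ_i for all i, j; in particular the 1-form Σ_i H_i dλ_i is closed, so the defining equations ∂(ln τ)/∂λ_j = H_j of the τ-function are compatible. -/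
open Matrix

attribute [local instance] Matrix.normedAddCommGroup Matrix.normedSpace

/-!
Differentiating `tr(A_i A_k)/(λ_k − λ_i)` in `λ_j` and inserting the Schlesinger equations, all
terms coming from the derivatives of the residues cancel, because the traces
`tr([A_i, A_j] A_k)` enter once with the factor `1/((λ_i − λ_j)(λ_k − λ_j))` and once, through
`∂A_j/∂λ_j`, with the opposite one. Only the derivative of the denominator survives, so
`∂H_i/∂λ_j = −tr(A_i A_j) / (2 (λ_j − λ_i)²)`, which is symmetric in `i` and `j`.
-/

open Finset

theorem Matrix.trace_mul_sub_mul {n R : Type*} [Fintype n] [CommRing R] (X Y Z : Matrix n n R) :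
    trace (X * (Y * Z - Z * Y)) = trace ((X * Y - Y * X) * Z) := by
  rw [mul_sub, sub_mul, trace_sub, trace_sub, ← Matrix.mul_assoc, ← Matrix.mul_assoc,
    trace_mul_cycle X Z Y]

-- `d k` plays the role of `∂A_k/∂λ_j`, with `M k = A_k` and `x = λ`.
theorem sum_trace_schlesinger_eq_zero {ι 𝕜 n : Type*} [Fintype ι] [DecidableEq ι] [Fintype n]
    [Field 𝕜] (M d : ι → Matrix n n 𝕜) {x : ι → 𝕜} (hx : Function.Injective x) {i j : ι}
    (hij : j ≠ i) (hd : ∀ k, k ≠ j → d k = (x k - x j)⁻¹ • (M k * M j - M j * M k))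
    (hdj : d j = -∑ m ∈ univ.filter (· ≠ j), (x j - x m)⁻¹ • (M j * M m - M m * M j)) :
    ∑ k ∈ univ.filter (· ≠ i), (trace (d i * M k) + trace (M i * d k)) / (x k - x i) = 0 := by
  set c : ι → 𝕜 := fun k => trace ((M i * M j - M j * M i) * M k) with hc
  have hc_apply : ∀ k, trace ((M i * M j - M j * M i) * M k) = c k := fun _ => rfl
  have hdi : ∀ k, trace (d i * M k) = (x i - x j)⁻¹ * c k := fun k => by
    rw [hd i hij.symm, smul_mul_assoc, trace_smul, smul_eq_mul]
  have hdk : ∀ k, k ≠ j → trace (M i * d k) = -((x k - x j)⁻¹ * c k) := fun k hk => by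
    rw [hd k hk, mul_smul_comm, trace_smul, smul_eq_mul, ← neg_sub (M j * M k), mul_neg,
      trace_neg, trace_mul_sub_mul, mul_neg]
  have hci : c i = 0 := by
    simp only [hc, sub_mul, trace_sub, Matrix.mul_assoc, trace_mul_comm (M i), sub_self]
  have hcj : c j = 0 := by
    simp only [hc, sub_mul, trace_sub, Matrix.mul_assoc, trace_mul_comm (M j), sub_self]
  set S := (univ.filter (· ≠ i)).erase j
  have hS : (univ.filter (· ≠ j)).erase i = S := by
    ext k
    simp only [S, mem_erase, mem_filter, mem_univ, true_and]
    tauto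
  have hdj' : trace (M i * d j) = -∑ m ∈ S, (x j - x m)⁻¹ * c m := by
    rw [hdj, mul_neg, trace_neg, mul_sum, trace_sum,
      ← add_sum_erase _ _ (by simpa using hij.symm : i ∈ univ.filter (· ≠ j)), hS]
    simp only [mul_smul_comm, trace_smul, smul_eq_mul, trace_mul_sub_mul, hc_apply, hci, mul_zero,
      zero_add]
  rw [← add_sum_erase _ _ (by simpa using hij : j ∈ univ.filter (· ≠ i)), hdi, hcj, hdj',
    mul_zero, zero_add, neg_div, sum_div, neg_add_eq_zero]
  refine sum_congr rfl fun k hk => ?_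
  obtain ⟨hkj, hki⟩ : k ≠ j ∧ k ≠ i := by simpa [S] using hk
  rw [hdi, hdk k hkj]
  have := sub_ne_zero.2 (hx.ne hkj)
  have := sub_ne_zero.2 (hx.ne hkj.symm)
  have := sub_ne_zero.2 (hx.ne hki)
  have := sub_ne_zero.2 (hx.ne hij)
  have := sub_ne_zero.2 (hx.ne hij.symm)
  field_simp
  ring

section Calculus

variable {𝕜 : Type*} [NontriviallyNormedField 𝕜] {E : Type*} [NormedAddCommGroup E]
  [NormedSpace 𝕜 E]

theorem HasFDerivAt.fun_div {c d : E → 𝕜} {c' d' : E →L[𝕜] 𝕜} {x : E}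
    (hc : HasFDerivAt c c' x) (hd : HasFDerivAt d d' x) (hx : d x ≠ 0) :
    HasFDerivAt (fun y => c y / d y) ((d x)⁻¹ • c' - (c x / d x ^ 2) • d') x := by
  have hinv : HasFDerivAt (fun y => (d y)⁻¹) ((-(d x ^ 2)⁻¹) • d') x :=
    (hasDerivAt_inv hx).comp_hasFDerivAt x hd
  simp only [div_eq_mul_inv]
  refine (hc.fun_mul hinv).congr_fderiv ?_
  ext v
  simp
  ring

theorem hasFDerivAt_apply_sub_apply {ι : Type*} (k i : ι) (x : ι → 𝕜) :
    HasFDerivAt (fun y : ι → 𝕜 => y k - y i)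
      (ContinuousLinearMap.proj (R := 𝕜) (φ := fun _ : ι => 𝕜) k -
        ContinuousLinearMap.proj i) x :=
  (ContinuousLinearMap.proj (R := 𝕜) (φ := fun _ : ι => 𝕜) k -
    ContinuousLinearMap.proj i).hasFDerivAt

variable [CompleteSpace 𝕜] {n : Type*} [Fintype n]

variable (𝕜 n) in
noncomputable def Matrix.traceMulCLM : Matrix n n 𝕜 →L[𝕜] Matrix n n 𝕜 →L[𝕜] 𝕜 :=
  LinearMap.toContinuousLinearMap
    (LinearMap.toContinuousLinearMap.toLinearMap ∘ₗ
      (LinearMap.mul 𝕜 (Matrix n n 𝕜)).compr₂ (Matrix.traceLinearMap n 𝕜 𝕜))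

@[simp]
theorem Matrix.traceMulCLM_apply (X Y : Matrix n n 𝕜) : traceMulCLM 𝕜 n X Y = trace (X * Y) :=
  rfl

theorem HasFDerivAt.trace_mul {f g : E → Matrix n n 𝕜} {f' g' : E →L[𝕜] Matrix n n 𝕜} {x : E}
    (hf : HasFDerivAt f f' x) (hg : HasFDerivAt g g' x) :
    HasFDerivAt (fun y => trace (f y * g y))
      ((traceMulCLM 𝕜 n (f x)).comp g' + (traceMulCLM 𝕜 n (g x)).comp f') x :=
  ((traceMulCLM 𝕜 n).hasFDerivAt_of_bilinear hf hg).congr_fderiv <| by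
    ext v
    exact congrArg _ (trace_mul_comm _ _)

end Calculus

section Hamiltonian

variable {𝕜 : Type*} [NontriviallyNormedField 𝕜] {n : Type*} [Fintype n]
  {ι : Type*} [Fintype ι] [DecidableEq ι]

noncomputable def hamiltonian (A : ι → (ι → 𝕜) → Matrix n n 𝕜) (i : ι) (y : ι → 𝕜) : 𝕜 :=
  (1 / 2) * ∑ j ∈ univ.filter (· ≠ i), trace (A i y * A j y) / (y j - y i)

theorem fderiv_hamiltonian_apply [CompleteSpace 𝕜] (A : ι → (ι → 𝕜) → Matrix n n 𝕜)
    {x : ι → 𝕜} (hx : Function.Injective x) (hA : ∀ k, DifferentiableAt 𝕜 (A k) x) (i : ι)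
    (v : ι → 𝕜) :
    fderiv 𝕜 (hamiltonian A i) x v = (1 / 2) * ∑ k ∈ univ.filter (· ≠ i),
      ((trace (fderiv 𝕜 (A i) x v * A k x) + trace (A i x * fderiv 𝕜 (A k) x v)) / (x k - x i)
        - trace (A i x * A k x) / (x k - x i) ^ 2 * (v k - v i)) := by
  have h := (HasFDerivAt.fun_sum (u := univ.filter (· ≠ i)) fun k hk =>
    ((hA i).hasFDerivAt.trace_mul (hA k).hasFDerivAt).fun_div (hasFDerivAt_apply_sub_apply k i x)
      (sub_ne_zero.2 (hx.ne (by simpa using hk)))).const_mul (1 / 2 : 𝕜)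
  rw [HasFDerivAt.fderiv (f := hamiltonian A i) h]
  simp [trace_mul_comm (fderiv 𝕜 (A i) x v), div_eq_inv_mul, mul_add, add_comm]

end Hamiltonian

theorem IsSchlesingerAt.fderiv_hamiltonian_single {N : ℕ}
    {A : Fin N → (Fin N → ℂ) → Matrix (Fin 2) (Fin 2) ℂ} {x : Fin N → ℂ}
    (hS : IsSchlesingerAt A x) (hx : Function.Injective x) (hA : ∀ k, DifferentiableAt ℂ (A k) x)
    {i j : Fin N} (hij : j ≠ i) :
    fderiv ℂ (hamiltonian A i) x (Pi.single j 1) =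
      -(1 / 2) * (trace (A i x * A j x) / (x j - x i) ^ 2) := by
  have hflat := sum_trace_schlesinger_eq_zero (fun k => A k x)
    (fun k => fderiv ℂ (A k) x (Pi.single j 1)) hx hij (fun k hk => hS.1 j k hk.symm) (hS.2 j)
  rw [fderiv_hamiltonian_apply A hx hA, sum_sub_distrib, hflat,
    sum_eq_single_of_mem j (by simpa using hij) fun k _ hkj => by simp [hkj, hij.symm]]
  simp [hij.symm]

theorem hamiltonians_closed_one_form_general (N : ℕ)
    (U : Set (Fin N → ℂ)) (hU : IsOpen U)
    (hdist : ∀ x ∈ U, ∀ i j : Fin N, i ≠ j → x i ≠ x j)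
    (A : Fin N → (Fin N → ℂ) → Matrix (Fin 2) (Fin 2) ℂ)
    (hA : ∀ j, DifferentiableOn ℂ (A j) U)
    (hSch : ∀ x ∈ U, IsSchlesingerAt A x)
    (H : Fin N → (Fin N → ℂ) → ℂ)
    (hH : ∀ i, ∀ y : Fin N → ℂ, H i y =
      (1 / 2) * ∑ j ∈ Finset.univ.filter (· ≠ i),
        Matrix.trace (A i y * A j y) / (y j - y i)) :
    ∀ x ∈ U, ∀ i j : Fin N,
      fderiv ℂ (H i) x (Pi.single j 1) = fderiv ℂ (H j) x (Pi.single i 1) := by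
  intro x hx i j
  obtain rfl : H = hamiltonian A := funext fun i => funext (hH i)
  have hinj : Function.Injective x := fun a b hab => by_contra fun hne => hdist x hx a b hne hab
  have hdiff : ∀ k, DifferentiableAt ℂ (A k) x := fun k => (hA k).differentiableAt (hU.mem_nhds hx)
  rcases eq_or_ne j i with rfl | hij
  · rfl
  rw [(hSch x hx).fderiv_hamiltonian_single hinj hdiff hij,
    (hSch x hx).fderiv_hamiltonian_single hinj hdiff hij.symm, trace_mul_comm, ← neg_sub, neg_sq]

/-- If `A_1,…,A_N` satisfy the Schlesinger system, then the Hamiltonians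
`H_i = (1/2) Σ_{j≠i} tr(A_i A_j)/(λ_j − λ_i)` satisfy `∂H_i/∂λ_j = ∂H_j/∂λ_i` for all
`i, j`; in particular the 1-form `Σ_i H_i dλ_i` is closed, so the defining equations
`∂(ln τ)/∂λ_j = H_j` of the τ-function are compatible. -/
theorem hamiltonians_closed_one_form (N : ℕ) (hN : 2 ≤ N)
    (U : Set (Fin N → ℂ)) (hU : IsOpen U)
    (hdist : ∀ x ∈ U, ∀ i j : Fin N, i ≠ j → x i ≠ x j)
    (A : Fin N → (Fin N → ℂ) → Matrix (Fin 2) (Fin 2) ℂ)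
    (hA : ∀ j, DifferentiableOn ℂ (A j) U)
    (hSch : ∀ x ∈ U, IsSchlesingerAt A x)
    (H : Fin N → (Fin N → ℂ) → ℂ)
    (hH : ∀ i, ∀ y : Fin N → ℂ, H i y =
      (1 / 2) * ∑ j ∈ Finset.univ.filter (· ≠ i),
        Matrix.trace (A i y * A j y) / (y j - y i)) :
    ∀ x ∈ U, ∀ i j : Fin N,
      fderiv ℂ (H i) x (Pi.single j 1) = fderiv ℂ (H j) x (Pi.single i 1) :=
  hamiltonians_closed_one_form_general N U hU hdist A hA hSch H hH
end

section
/- Fix pairwise distinct λ_1,…,λ_N ∈ ℂ and regard H_i as the polynomial function of the variables a = (a_j^α)_{1≤j≤N, α∈{1,2,3}} ∈ ℂ^{3N} given by H_i(a) = Σ_{j≠i} Σ_{α=1}^3 a_i^α a_j^α/(λ_j − λ_i). Then, with respect to the Poisson bracket {F,G}(a) = Σ_{k=1}^N Σ_{α,β,γ} ε^{αβγ} a_k^γ (∂F/∂a_k^α)(∂G/∂a_k^β), where ε^{αβγ} is the totally antisymmetric Levi-Civita symbol with ε^{123} = 1, all the Hamiltonians Poisson-commute: {H_i, H_j} = 0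 for all i, j. -/
/-!
In coordinates the bracket reads `{F, G}(a) = Σ_k a_k · (∇_k F × ∇_k G)`. For a quadratic
Hamiltonian `H_i = Σ_j c_ij ⟨a_i, a_j⟩` the gradients are `∇_k H_i = δ_ki Σ_l c_il a_l + c_ik a_i`,
and expanding gives `{H_i, H_j} = Σ_l (c_il c_jl - c_ji c_il - c_ij c_jl) det(a_i, a_j, a_l)`.
The determinant vanishes unless `i, j, l` are distinct, and for `c_ij = 1/(λ_j - λ_i)` the
coefficient then vanishes by the partial-fraction identity behind the classical Yang–Baxter
equation for the rational `r`-matrix.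
-/

/-- The totally antisymmetric Levi-Civita symbol `ε^{αβγ}` on three indices,
with `ε^{123} = 1`. -/
def levicivita : Fin 3 → Fin 3 → Fin 3 → ℂ := fun a b c =>
  if (a = 0 ∧ b = 1 ∧ c = 2) ∨ (a = 1 ∧ b = 2 ∧ c = 0) ∨ (a = 2 ∧ b = 0 ∧ c = 1) then 1
  else if (a = 0 ∧ b = 2 ∧ c = 1) ∨ (a = 2 ∧ b = 1 ∧ c = 0) ∨ (a = 1 ∧ b = 0 ∧ c = 2) then -1
  else 0

/-- The Lie–Poisson bracket of `sl(2,ℂ)^N` in the coordinates `a = (a_k^α)`: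
`{F,G}(a) = Σ_k Σ_{α,β,γ} ε^{αβγ} a_k^γ (∂F/∂a_k^α)(∂G/∂a_k^β)`. -/
noncomputable def poissonBracket {N : ℕ} (F G : (Fin N → Fin 3 → ℂ) → ℂ)
    (a : Fin N → Fin 3 → ℂ) : ℂ :=
  ∑ k : Fin N, ∑ α : Fin 3, ∑ β : Fin 3, ∑ γ : Fin 3,
    levicivita α β γ * a k γ *
      fderiv ℂ F a (Pi.single k (Pi.single α 1)) *
      fderiv ℂ G a (Pi.single k (Pi.single β 1))

open Matrix

theorem levicivita_contract (x y z : Fin 3 → ℂ) :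
    ∑ α, ∑ β, ∑ γ, levicivita α β γ * z γ * x α * y β = z ⬝ᵥ x ⨯₃ y := by
  simp [Fin.sum_univ_three, levicivita, cross_apply, dotProduct]
  ring

section QuadraticHamiltonian

variable {N : ℕ}

noncomputable def partialGrad (F : (Fin N → Fin 3 → ℂ) → ℂ) (a : Fin N → Fin 3 → ℂ)
    (k : Fin N) : Fin 3 → ℂ :=
  fun α => fderiv ℂ F a (Pi.single k (Pi.single α 1))

theorem poissonBracket_eq_sum_dot_cross (F G : (Fin N → Fin 3 → ℂ) → ℂ)
    (a : Fin N → Fin 3 → ℂ) :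
    poissonBracket F G a = ∑ k, a k ⬝ᵥ partialGrad F a k ⨯₃ partialGrad G a k :=
  Finset.sum_congr rfl fun _ _ => levicivita_contract _ _ _

noncomputable def quadraticHamiltonian (c : Fin N → Fin N → ℂ) (i : Fin N)
    (a : Fin N → Fin 3 → ℂ) : ℂ :=
  ∑ j, c i j * (a i ⬝ᵥ a j)

noncomputable def coordCLM (k : Fin N) (α : Fin 3) : (Fin N → Fin 3 → ℂ) →L[ℂ] ℂ :=
  (ContinuousLinearMap.proj (R := ℂ) (φ := fun _ : Fin 3 => ℂ) α).comp
    (ContinuousLinearMap.proj (R := ℂ) (φ := fun _ : Fin N => Fin 3 → ℂ) k)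

theorem partialGrad_quadraticHamiltonian (c : Fin N → Fin N → ℂ) (i : Fin N)
    (a : Fin N → Fin 3 → ℂ) (k : Fin N) :
    partialGrad (quadraticHamiltonian c i) a k =
      (if k = i then ∑ j, c i j • a j else 0) + c i k • a i := by
  funext δ
  have h : HasFDerivAt (quadraticHamiltonian c i)
      (∑ j, c i j • ∑ α, (a i α • coordCLM j α + a j α • coordCLM i α)) a := by
    unfold quadraticHamiltonian dotProduct
    refine HasFDerivAt.fun_sum fun j _ => .const_mul (.fun_sum fun α _ => ?_) _
    exact (coordCLM i α).hasFDerivAt.mul (coordCLM j α).hasFDerivAt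
  rw [partialGrad, h.fderiv]
  by_cases hk : k = i
  · subst hk
    simp [coordCLM, Pi.single_apply, ite_apply, Finset.sum_add_distrib, add_comm]
  · simp [coordCLM, Pi.single_apply, ite_apply, hk, Ne.symm hk]

theorem poissonBracket_self (F : (Fin N → Fin 3 → ℂ) → ℂ) (a : Fin N → Fin 3 → ℂ) :
    poissonBracket F F a = 0 := by
  simp [poissonBracket_eq_sum_dot_cross, cross_self]

theorem poissonBracket_quadraticHamiltonian (c : Fin N → Fin N → ℂ) (i j : Fin N)
    (a : Fin N → Fin 3 → ℂ) :
    poissonBracket (quadraticHamiltonian c i) (quadraticHamiltonian c j) a =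
      ∑ l, (c i l * c j l - c j i * c i l - c i j * c j l) * (a l ⬝ᵥ a i ⨯₃ a j) := by
  rcases eq_or_ne i j with rfl | hij
  · simp [poissonBracket_self, cross_self]
  have hj : ∀ l, a j ⬝ᵥ a i ⨯₃ a l = -(a l ⬝ᵥ a i ⨯₃ a j) := fun l => by
    rw [← triple_product_permutation, ← cross_anticomm, dotProduct_neg]
  have hi : ∀ l, a i ⬝ᵥ a l ⨯₃ a j = -(a l ⬝ᵥ a i ⨯₃ a j) := fun l => by
    rw [triple_product_permutation, ← cross_anticomm, dotProduct_neg]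
  simp only [poissonBracket_eq_sum_dot_cross, partialGrad_quadraticHamiltonian, map_add,
    LinearMap.add_apply, map_smul, LinearMap.smul_apply, dotProduct_add, dotProduct_smul,
    Finset.sum_add_distrib, apply_ite, map_sum, map_zero, LinearMap.coe_sum, LinearMap.coe_smul,
    ite_apply, Finset.sum_apply, Pi.smul_apply, LinearMap.zero_apply,
    Finset.sum_ite_irrel, Finset.sum_const_zero, dotProduct_sum, smul_eq_mul, Finset.mul_sum,
    dotProduct_zero, Finset.sum_ite_eq', Finset.mem_univ, if_true, if_neg hij.symm, mul_zero,
    mul_add, zero_add, hi, hj, mul_neg]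
  rw [← Finset.sum_add_distrib, ← Finset.sum_add_distrib]
  exact Finset.sum_congr rfl fun l _ => by ring

end QuadraticHamiltonian

theorem yangBaxter_inv_sub {K : Type*} [Field K] {x y z : K} (hxy : x ≠ y)
    (hxz : x ≠ z) (hyz : y ≠ z) :
    (z - x)⁻¹ * (z - y)⁻¹ - (x - y)⁻¹ * (z - x)⁻¹ - (y - x)⁻¹ * (z - y)⁻¹ = 0 := by
  have := sub_ne_zero.2 hxy
  have := sub_ne_zero.2 hxz.symm
  have := sub_ne_zero.2 hyz.symm
  have := sub_ne_zero.2 hxy.symm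
  field_simp
  ring

/-- For pairwise distinct `λ_1,…,λ_N`, the Schlesinger Hamiltonians
`H_i(a) = Σ_{j≠i} Σ_α a_i^α a_j^α/(λ_j − λ_i)` Poisson-commute with respect to the
Lie–Poisson bracket: `{H_i, H_j} = 0` for all `i, j`. -/
theorem hamiltonians_poisson_commute (N : ℕ) (lam : Fin N → ℂ)
    (hdist : ∀ i j : Fin N, i ≠ j → lam i ≠ lam j)
    (H : Fin N → (Fin N → Fin 3 → ℂ) → ℂ)
    (hH : ∀ i, ∀ a : Fin N → Fin 3 → ℂ, H i a =
      ∑ j ∈ Finset.univ.filter (· ≠ i), ∑ α : Fin 3,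
        a i α * a j α / (lam j - lam i)) :
    ∀ i j : Fin N, ∀ a : Fin N → Fin 3 → ℂ, poissonBracket (H i) (H j) a = 0 := by
  intro i j a
  -- The excluded term `j = i` may be put back: its coefficient is `(lam i - lam i)⁻¹ = 0`.
  have hH_eq : ∀ i, H i = quadraticHamiltonian (fun i j => (lam j - lam i)⁻¹) i :=
    fun i => funext fun b => by
      rw [hH, quadraticHamiltonian, Finset.sum_filter]
      refine Finset.sum_congr rfl fun j _ => ?_
      rcases eq_or_ne j i with rfl | hji
      · simp
      · simp [hji, dotProduct, Finset.mul_sum, div_eq_inv_mul]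
  rw [hH_eq, hH_eq, poissonBracket_quadraticHamiltonian]
  refine Finset.sum_eq_zero fun l _ => ?_
  by_cases hdeg : l = i ∨ l = j ∨ i = j
  · rcases hdeg with rfl | rfl | rfl <;> simp [dot_self_cross, dot_cross_self, cross_self]
  · obtain ⟨hli, hlj, hij⟩ : l ≠ i ∧ l ≠ j ∧ i ≠ j := by tauto
    rw [yangBaxter_inv_sub (hdist _ _ hij) (hdist _ _ hli.symm) (hdist _ _ hlj.symm), zero_mul]
end

section
/- Fix indices k ≠ l and j ∉ {k, l}. Let A_j : U → M_2(ℂ) and let g, h : U → ℂ² be holomorphic maps satisfying ∂g/∂λ_j = A_j g/(λ_j − λ_k) and ∂h/∂λ_j = A_j h/(λ_j − λ_l), and suppose the 2×2 matrix G with columns (g, h) is invertible. Then tr[A_j G P₊ G⁻¹]/(λ_j − λ_k) + tr[A_j G P₋ G⁻¹]/(λ_j − λ_l) = tr[(∂G/∂λ_j) G⁻¹] = (∂ det G/∂λ_j)/det G. (This identity gives the shift Ĥ_j − H_j = ∂(ln det G)/∂λ_j of the Hamiltonians under an elementary Schlesinger transformation for j ≠ k, l.) -/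
/-!
Each column of `G` is moved by `A_j` at its own rate, so `∂_j G = A_j G D` with
`D = diag((λ_j − λ_k)⁻¹, (λ_j − λ_l)⁻¹) = (λ_j − λ_k)⁻¹ P₊ + (λ_j − λ_l)⁻¹ P₋`; the first identity
is then linearity of the trace. The second is Jacobi's formula `∂ det G = tr(adj G · ∂G)`
combined with `G⁻¹ = adj G / det G`.
-/

open Matrix

attribute [local instance] Matrix.normedAddCommGroup Matrix.normedSpace

/-- The projection matrix `P₊ = [[1,0],[0,0]]`. -/
def Pplus : Matrix (Fin 2) (Fin 2) ℂ := !![1, 0; 0, 0]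

/-- The projection matrix `P₋ = [[0,0],[0,1]]`. -/
def Pminus : Matrix (Fin 2) (Fin 2) ℂ := !![0, 0; 0, 1]

section MatrixCalculus

variable {𝕜 E : Type*} [NontriviallyNormedField 𝕜] [NormedAddCommGroup E] [NormedSpace 𝕜 E]
  {m n : Type*} [Fintype m] [Fintype n] {x : E}

omit [Fintype m] in
theorem fderiv_vector_apply {u : E → m → 𝕜} (hu : DifferentiableAt 𝕜 u x) (v : E) (i : m) :
    fderiv 𝕜 (fun y => u y i) x v = fderiv 𝕜 u x v i := by
  rw [fderiv_apply hu]; rfl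

omit [Fintype m] in
theorem fderiv_matrix_apply {F : E → Matrix m n 𝕜} (hF : DifferentiableAt 𝕜 F x) (v : E)
    (i : m) (c : n) : fderiv 𝕜 F x v i c = fderiv 𝕜 (fun y => F y i c) x v := by
  have hrow : fderiv 𝕜 (fun y => F y i) x v = fderiv 𝕜 F x v i := by
    rw [fderiv_apply hF]; rfl
  rw [← hrow, fderiv_vector_apply (differentiableAt_pi.1 hF i)]

omit [Fintype m] in
theorem differentiableAt_of_columns {F : E → Matrix m n 𝕜} {u : n → E → m → 𝕜}
    (hF : ∀ y i c, F y i c = u c y i) (hu : ∀ c, DifferentiableAt 𝕜 (u c) x) :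
    DifferentiableAt 𝕜 F x := by
  have : F = fun y => Matrix.of fun i c => u c y i := by
    funext y; ext i c; exact hF y i c
  subst this
  exact differentiableAt_pi.2 fun i => differentiableAt_pi.2 fun c =>
    differentiableAt_pi.1 (hu c) i

theorem fderiv_eq_mul_diagonal_of_columns [DecidableEq n] {F : E → Matrix m n 𝕜}
    {u : n → E → m → 𝕜} (hF : ∀ y i c, F y i c = u c y i)
    (hu : ∀ c, DifferentiableAt 𝕜 (u c) x) (A : Matrix m m 𝕜) (d : n → 𝕜) (v : E)
    (hu' : ∀ c, fderiv 𝕜 (u c) x v = d c • A *ᵥ u c x) :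
    fderiv 𝕜 F x v = A * F x * diagonal d := by
  ext i c
  have hentry : (fun y => F y i c) = fun y => u c y i := funext fun y => hF y i c
  rw [fderiv_matrix_apply (differentiableAt_of_columns hF hu), hentry,
    fderiv_vector_apply (hu c), hu', mul_diagonal, mul_apply]
  simp only [Pi.smul_apply, smul_eq_mul, mulVec, dotProduct, Finset.mul_sum, Finset.sum_mul, hF]
  exact Finset.sum_congr rfl fun _ _ => by ring

theorem fderiv_det_fin_two {F : E → Matrix (Fin 2) (Fin 2) 𝕜} (hF : DifferentiableAt 𝕜 F x)
    (v : E) : fderiv 𝕜 (fun y => (F y).det) x v = trace (adjugate (F x) * fderiv 𝕜 F x v) := by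
  have hent : ∀ i c, HasFDerivAt (fun y => F y i c) (fderiv 𝕜 (fun y => F y i c) x) x :=
    fun i c => (differentiableAt_pi.1 (differentiableAt_pi.1 hF i) c).hasFDerivAt
  have hdet : HasFDerivAt (fun y => (F y).det)
      ((F x 0 0 • fderiv 𝕜 (fun y => F y 1 1) x + F x 1 1 • fderiv 𝕜 (fun y => F y 0 0) x) -
        (F x 0 1 • fderiv 𝕜 (fun y => F y 1 0) x + F x 1 0 • fderiv 𝕜 (fun y => F y 0 1) x)) x := by
    simp only [det_fin_two]
    exact ((hent 0 0).mul (hent 1 1)).sub ((hent 0 1).mul (hent 1 0))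
  rw [hdet.fderiv]
  simp only [adjugate_fin_two, trace_fin_two, mul_apply, Fin.sum_univ_two, fderiv_matrix_apply hF]
  simp only [_root_.sub_apply, _root_.add_apply, _root_.smul_apply, smul_eq_mul, of_apply,
    cons_val', cons_val_zero, cons_val_fin_one, cons_val_one]
  ring

theorem fderiv_det_div_det_fin_two {F : E → Matrix (Fin 2) (Fin 2) 𝕜}
    (hF : DifferentiableAt 𝕜 F x) (v : E) :
    fderiv 𝕜 (fun y => (F y).det) x v / (F x).det = trace (fderiv 𝕜 F x v * (F x)⁻¹) := by
  rw [fderiv_det_fin_two hF, trace_mul_comm, inv_def, Ring.inverse_eq_inv', mul_smul_comm,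
    trace_smul, smul_eq_mul, div_eq_inv_mul]

end MatrixCalculus

theorem diagonal_eq_smul_Pplus_add_smul_Pminus (a b : ℂ) :
    diagonal ![a, b] = a • Pplus + b • Pminus := by
  ext i c; fin_cases i <;> fin_cases c <;> simp [Pplus, Pminus]

theorem hamiltonian_shift_identity_general (N : ℕ)
    (U : Set (Fin N → ℂ)) (hU : IsOpen U)
    (k l j : Fin N)
    (Aj : (Fin N → ℂ) → Matrix (Fin 2) (Fin 2) ℂ)
    (g h : (Fin N → ℂ) → Fin 2 → ℂ)
    (hg : DifferentiableOn ℂ g U) (hh : DifferentiableOn ℂ h U)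
    (hgeq : ∀ x ∈ U, fderiv ℂ g x (Pi.single j 1) =
      (x j - x k)⁻¹ • (Aj x).mulVec (g x))
    (hheq : ∀ x ∈ U, fderiv ℂ h x (Pi.single j 1) =
      (x j - x l)⁻¹ • (Aj x).mulVec (h x))
    (G : (Fin N → ℂ) → Matrix (Fin 2) (Fin 2) ℂ)
    (hGdef : ∀ y : Fin N → ℂ, ∀ i : Fin 2, G y i 0 = g y i ∧ G y i 1 = h y i) :
    ∀ x ∈ U,
      Matrix.trace (Aj x * (G x * Pplus * (G x)⁻¹)) / (x j - x k) +
          Matrix.trace (Aj x * (G x * Pminus * (G x)⁻¹)) / (x j - x l) =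
        Matrix.trace (fderiv ℂ G x (Pi.single j 1) * (G x)⁻¹) ∧
      Matrix.trace (fderiv ℂ G x (Pi.single j 1) * (G x)⁻¹) =
        fderiv ℂ (fun y => (G y).det) x (Pi.single j 1) / (G x).det := by
  intro x hx
  have hcols : ∀ y i c, G y i c = ![g, h] c y i := fun y i c => by
    fin_cases c
    exacts [(hGdef y i).1, (hGdef y i).2]
  have hdiff : ∀ c, DifferentiableAt ℂ (![g, h] c) x := Fin.forall_fin_two.2
    ⟨(hg x hx).differentiableAt (hU.mem_nhds hx), (hh x hx).differentiableAt (hU.mem_nhds hx)⟩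
  have hG' : fderiv ℂ G x (Pi.single j 1) =
      Aj x * G x * diagonal ![(x j - x k)⁻¹, (x j - x l)⁻¹] :=
    fderiv_eq_mul_diagonal_of_columns hcols hdiff _ _ _
      (Fin.forall_fin_two.2 ⟨hgeq x hx, hheq x hx⟩)
  refine ⟨?_, (fderiv_det_div_det_fin_two (differentiableAt_of_columns hcols hdiff) _).symm⟩
  rw [hG', diagonal_eq_smul_Pplus_add_smul_Pminus]
  simp only [mul_add, add_mul, mul_smul_comm, smul_mul_assoc, trace_add, trace_smul,
    Matrix.mul_assoc, smul_eq_mul, div_eq_inv_mul]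

/-- For `k ≠ l`, `j ∉ {k,l}`, holomorphic `g, h` with
`∂g/∂λ_j = A_j g/(λ_j − λ_k)`, `∂h/∂λ_j = A_j h/(λ_j − λ_l)`, and `G = (g, h)` invertible:
`tr[A_j G P₊ G⁻¹]/(λ_j − λ_k) + tr[A_j G P₋ G⁻¹]/(λ_j − λ_l) = tr[(∂G/∂λ_j) G⁻¹]
 = (∂ det G/∂λ_j)/det G`,
which gives the shift `Ĥ_j − H_j = ∂(ln det G)/∂λ_j` of the Hamiltonians under an
elementary Schlesinger transformation for `j ≠ k, l`. -/
theorem hamiltonian_shift_identity (N : ℕ) (hN : 2 ≤ N)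
    (U : Set (Fin N → ℂ)) (hU : IsOpen U)
    (hdist : ∀ x ∈ U, ∀ i j : Fin N, i ≠ j → x i ≠ x j)
    (k l j : Fin N) (hkl : k ≠ l) (hjk : j ≠ k) (hjl : j ≠ l)
    (Aj : (Fin N → ℂ) → Matrix (Fin 2) (Fin 2) ℂ)
    (g h : (Fin N → ℂ) → Fin 2 → ℂ)
    (hg : DifferentiableOn ℂ g U) (hh : DifferentiableOn ℂ h U)
    (hgeq : ∀ x ∈ U, fderiv ℂ g x (Pi.single j 1) =
      (x j - x k)⁻¹ • (Aj x).mulVec (g x))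
    (hheq : ∀ x ∈ U, fderiv ℂ h x (Pi.single j 1) =
      (x j - x l)⁻¹ • (Aj x).mulVec (h x))
    (G : (Fin N → ℂ) → Matrix (Fin 2) (Fin 2) ℂ)
    (hGdef : ∀ y : Fin N → ℂ, ∀ i : Fin 2, G y i 0 = g y i ∧ G y i 1 = h y i)
    (hGinv : ∀ x ∈ U, IsUnit (G x).det) :
    ∀ x ∈ U,
      Matrix.trace (Aj x * (G x * Pplus * (G x)⁻¹)) / (x j - x k) +
          Matrix.trace (Aj x * (G x * Pminus * (G x)⁻¹)) / (x j - x l) =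
        Matrix.trace (fderiv ℂ G x (Pi.single j 1) * (G x)⁻¹) ∧
      Matrix.trace (fderiv ℂ G x (Pi.single j 1) * (G x)⁻¹) =
        fderiv ℂ (fun y => (G y).det) x (Pi.single j 1) / (G x).det :=
  hamiltonian_shift_identity_general N U hU k l j Aj g h hg hh hgeq hheq G hGdef
end
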